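/- arXiv:2007.14737 — 2 statements merged into one kernel-verified Lean document; each statement's English description precedes it below -/
import Mathlib

section
/- Suppose Ξ is holomorphic on S_α, extends continuously to the closure of S_α, satisfies the jump relation Ξ₊(g(x) − iα) = Ξ₋(x) + G_Ξ(x) for all x ∈ ℝ, and that there exist constants C_Ξ, C₋₁ ∈ ℂ such that, uniformly up to the boundary, Ξ(z) = C₋₁/z + O(z^{−2}) as Re(z) → +∞ and Ξ(z) = C_Ξ + C₋₁/z + O(z^{−2}) as Re(z) → −∞. Then, uniformly up to the boundary, Ξ(z) = −𝒢(z) + O(e^{−(2π/α)·Re(γ̃₊z)}) as Re(z) → +∞ and Ξ(z) = C_Ξ − 𝒢(z) + O(e^{(2π/α)·Re(γ̃₋z)}) as Re(z) → −∞. -/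
open MeasureTheory Real Set

noncomputable section

/-- The strip `S_α = {z ∈ ℂ : −α < Im z < 0}`. -/
def Strip (α : ℝ) : Set ℂ := {z : ℂ | -α < z.im ∧ z.im < 0}

/-- `γ̃ = −iα/(κ − iα)`. -/
def gamTilde (α κ : ℝ) : ℂ := -(Complex.I * (α : ℂ)) / ((κ : ℂ) - Complex.I * (α : ℂ))

/-!
Near `+∞` put `F = Ξ + 𝒢` and `p = κ⁺ − iα`. Where `G^{(c)}` vanishes and `g` is a translation,
the jump relation reads `F(x + p) = F(x)`, so gluing the translates of `F` by `ℤp` along the lines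
`Im z ∈ ℤα` gives a `p`-periodic function, holomorphic across the seams by Morera's theorem. In
the variable `ζ = z / p` it is `1`-periodic, holomorphic for large `Im ζ` and tends to `0` there,
so it decays like `e^{−2π Im ζ}`; as `(2π/α) Re(γ̃₊ z) = 2π Im(z / p)`, this is the claim. Near
`−∞` the same argument applies to `Ξ − C_Ξ + 𝒢` after the reflection `z ↦ −z − iα` of the strip.
-/

open Filter Topology Complex
open scoped Interval

namespace Complex

variable {E : Type*} [NormedAddCommGroup E] [NormedSpace ℂ E] {f : ℂ → E}

lemma integral_boundary_rect_eq_zero_of_differentiableOn_diff_im_eq {z w : ℂ} {a : ℝ}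
    (hc : ContinuousOn f (Rectangle z w))
    (hd : DifferentiableOn ℂ f (Rectangle z w \ {ξ | ξ.im = a})) :
    (∫ x : ℝ in z.re..w.re, f (x + z.im * I)) - (∫ x : ℝ in z.re..w.re, f (x + w.im * I)) +
      I • (∫ y : ℝ in z.im..w.im, f (w.re + y * I)) -
      I • (∫ y : ℝ in z.im..w.im, f (z.re + y * I)) = 0 := by
  have off_line : ∀ z' w' : ℂ, Rectangle z' w' ⊆ Rectangle z w →
      a ∉ Ioo (min z'.im w'.im) (max z'.im w'.im) →
      (∫ x : ℝ in z'.re..w'.re, f (x + z'.im * I)) - (∫ x : ℝ in z'.re..w'.re, f (x + w'.im * I)) +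
        I • (∫ y : ℝ in z'.im..w'.im, f (w'.re + y * I)) -
        I • (∫ y : ℝ in z'.im..w'.im, f (z'.re + y * I)) = 0 := by
    refine fun z' w' hsub ha ↦ integral_boundary_rect_eq_zero_of_continuousOn_of_differentiableOn
      f z' w' (hc.mono hsub) (hd.mono fun ξ hξ ↦ ⟨hsub ⟨?_, ?_⟩, fun h ↦ ha (h ▸ hξ.2)⟩)
    · exact Ioo_subset_Icc_self hξ.1
    · exact Ioo_subset_Icc_self hξ.2
  by_cases ha : a ∈ Ioo (min z.im w.im) (max z.im w.im)
  swap
  · exact off_line z w subset_rfl ha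
  have ha' : a ∈ [[z.im, w.im]] := Ioo_subset_Icc_self ha
  have hlow : [[z.im, a]] ⊆ [[z.im, w.im]] := uIcc_subset_uIcc left_mem_uIcc ha'
  have hhigh : [[a, w.im]] ⊆ [[z.im, w.im]] := uIcc_subset_uIcc ha' right_mem_uIcc
  have h₁ := off_line z (w.re + a * I)
    (fun ξ hξ ↦ ⟨by simpa using hξ.1, hlow (by simpa using hξ.2)⟩) (by simpa using le_of_lt)
  have h₂ := off_line (z.re + a * I) w
    (fun ξ hξ ↦ ⟨by simpa using hξ.1, hhigh (by simpa using hξ.2)⟩) (by simpa using le_of_lt)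
  simp only [add_re, ofReal_re, mul_re, I_re, mul_zero, ofReal_im, I_im, mul_one, sub_self,
    add_zero, add_im, mul_im, zero_add] at h₁ h₂
  have vertical : ∀ x ∈ [[z.re, w.re]], ∀ s t : ℝ, [[s, t]] ⊆ [[z.im, w.im]] →
      IntervalIntegrable (fun y : ℝ ↦ f (x + y * I)) volume s t := by
    intro x hx s t hst
    refine ContinuousOn.intervalIntegrable (hc.comp (by fun_prop) fun y hy ↦ ?_)
    exact ⟨by simpa using hx, by simpa using hst hy⟩
  rw [← intervalIntegral.integral_add_adjacent_intervals (vertical w.re right_mem_uIcc _ _ hlow)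
      (vertical w.re right_mem_uIcc _ _ hhigh),
    ← intervalIntegral.integral_add_adjacent_intervals (vertical z.re left_mem_uIcc _ _ hlow)
      (vertical z.re left_mem_uIcc _ _ hhigh), smul_add, smul_add]
  linear_combination (norm := module) h₁ + h₂

theorem differentiableOn_of_differentiableOn_diff_im_eq [CompleteSpace E] {U : Set ℂ}
    (hU : IsOpen U) {a : ℝ} (hc : ContinuousOn f U)
    (hd : DifferentiableOn ℂ f (U \ {z | z.im = a})) : DifferentiableOn ℂ f U := by
  refine (isConservativeOn_and_continuousOn_iff_isDifferentiableOn hU).mp ⟨fun z w hzw ↦ ?_, hc⟩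
  rw [← add_eq_zero_iff_eq_neg, wedgeIntegral_add_wedgeIntegral_eq]
  exact integral_boundary_rect_eq_zero_of_differentiableOn_diff_im_eq (hc.mono hzw)
    (hd.mono (sdiff_subset_sdiff_left hzw))

end Complex

def stripRep (p z : ℂ) : ℂ := z - ⌊z.im / p.im⌋ * p

def periodize {E : Type*} (p : ℂ) (F : ℂ → E) (z : ℂ) : E := F (stripRep p z)

section StripRep

variable {p : ℂ}

lemma stripRep_add_self (hp : p.im ≠ 0) (z : ℂ) : stripRep p (z + p) = stripRep p z := by
  simp only [stripRep, add_im, add_div, div_self hp, Int.floor_add_one]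
  push_cast
  ring

lemma im_stripRep_mem (hp : p.im < 0) (z : ℂ) : (stripRep p z).im ∈ Ioc p.im 0 := by
  have h : (stripRep p z).im = p.im * Int.fract (z.im / p.im) := by
    simp only [stripRep, sub_im, mul_im, intCast_re, intCast_im, zero_mul, add_zero, Int.fract]
    rw [mul_sub, mul_div_cancel₀ _ hp.ne]
    ring
  rw [h]
  constructor
  · nlinarith [Int.fract_lt_one (z.im / p.im)]
  · nlinarith [Int.fract_nonneg (z.im / p.im)]

lemma stripRep_eq_self {z : ℂ} (hz : z.im ∈ Ioc p.im 0) : stripRep p z = z := by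
  have hp : p.im < 0 := hz.1.trans_le hz.2
  have : ⌊z.im / p.im⌋ = 0 := by
    rw [Int.floor_eq_zero_iff]
    constructor
    · exact div_nonneg_of_nonpos hz.2 hp.le
    · rw [div_lt_one_of_neg hp]; exact hz.1
  simp [stripRep, this]

lemma div_im_stripRep (hp : p ≠ 0) (z : ℂ) : (stripRep p z / p).im = (z / p).im := by
  simp [stripRep, sub_div, mul_div_cancel_right₀ _ hp]

end StripRep

section Periodize

variable {E : Type*} {p : ℂ} {R : ℝ} {F : ℂ → E}

lemma periodic_periodize (hp : p.im ≠ 0) (F : ℂ → E) : Function.Periodic (periodize p F) p :=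
  fun z ↦ congrArg F (stripRep_add_self hp z)

lemma periodize_eq (hp : p.im < 0) (hper : ∀ x : ℝ, R ≤ x → F (x + p) = F x) {z : ℂ}
    (hz : z.im ∈ Icc p.im 0) (hzR : R ≤ z.re - p.re) : periodize p F z = F z := by
  rcases hz.1.eq_or_lt with hbot | hlt
  · have hreal : ((z - p).re : ℂ) = z - p := by
      apply Complex.ext <;> simp [← hbot]
    rw [← (periodic_periodize hp.ne F).sub_eq, periodize, stripRep_eq_self (by simp [← hbot, hp])]
    calc F (z - p) = F ((z - p).re) := by rw [hreal]
      _ = F ((z - p).re + p) := (hper _ (by simpa using hzR)).symm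
      _ = F z := by rw [hreal, sub_add_cancel]
  · exact congrArg F (stripRep_eq_self ⟨hlt, hz.2⟩)

lemma continuousOn_periodize [TopologicalSpace E] (hp : p.im < 0)
    (hc : ContinuousOn F (Ici R ×ℂ Icc p.im 0)) (hper : ∀ x : ℝ, R ≤ x → F (x + p) = F x) :
    ContinuousOn (periodize p F) (Ici (R + |p.re|) ×ℂ Icc p.im (-p.im)) := by
  have hlow : ContinuousOn (periodize p F) (Ici (R + |p.re|) ×ℂ Icc p.im 0) := by
    refine (hc.mono fun z hz ↦ ⟨?_, hz.2⟩).congr fun z hz ↦ periodize_eq hp hper hz.2 ?_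
    · have : R + |p.re| ≤ z.re := hz.1
      exact (le_add_of_nonneg_right (abs_nonneg _)).trans this
    · have : R + |p.re| ≤ z.re := hz.1
      linarith [le_abs_self p.re]
  have hhigh : ContinuousOn (periodize p F) (Ici (R + |p.re|) ×ℂ Icc 0 (-p.im)) := by
    refine (hc.comp (continuous_add_const p).continuousOn fun z hz ↦ ?_).congr fun z hz ↦ ?_
    · have : R + |p.re| ≤ z.re := hz.1
      have him : z.im ∈ Icc 0 (-p.im) := hz.2
      exact ⟨show R ≤ z.re + p.re by linarith [neg_abs_le p.re],
        show p.im ≤ z.im + p.im by linarith [him.1], show z.im + p.im ≤ 0 by linarith [him.2]⟩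
    · have : R + |p.re| ≤ z.re := hz.1
      have him : z.im ∈ Icc 0 (-p.im) := hz.2
      rw [← (periodic_periodize hp.ne F) z]
      refine periodize_eq hp hper ⟨?_, ?_⟩ ?_ <;> simp only [add_im, add_re] <;>
        linarith [him.1, him.2, abs_nonneg p.re]
  have hunion : Ici (R + |p.re|) ×ℂ Icc p.im 0 ∪ Ici (R + |p.re|) ×ℂ Icc 0 (-p.im) =
      Ici (R + |p.re|) ×ℂ Icc p.im (-p.im) := by
    rw [← Icc_union_Icc_eq_Icc hp.le (by linarith : (0 : ℝ) ≤ -p.im)]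
    ext z
    simp only [mem_union, mem_reProdIm]
    tauto
  rw [← hunion]
  exact hlow.union_of_isClosed hhigh (isClosed_Ici.reProdIm isClosed_Icc)
    (isClosed_Ici.reProdIm isClosed_Icc)

end Periodize

section Holomorphic

variable {E : Type*} [NormedAddCommGroup E] [NormedSpace ℂ E] [CompleteSpace E]
  {p : ℂ} {R : ℝ} {F : ℂ → E}

theorem differentiableOn_periodize (hp : p.im < 0) (hc : ContinuousOn F (Ici R ×ℂ Icc p.im 0))
    (hd : DifferentiableOn ℂ F (Ioi R ×ℂ Ioo p.im 0)) (hper : ∀ x : ℝ, R ≤ x → F (x + p) = F x) :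
    DifferentiableOn ℂ (periodize p F) (Ioi (R + |p.re|) ×ℂ Ioo p.im (-p.im)) := by
  have hR : R ≤ R + |p.re| := le_add_of_nonneg_right (abs_nonneg _)
  have hlow : DifferentiableOn ℂ (periodize p F) (Ioi (R + |p.re|) ×ℂ Ioo p.im 0) := by
    refine (hd.mono fun z hz ↦ ⟨hR.trans_lt hz.1, hz.2⟩).congr fun z hz ↦
      congrArg F (stripRep_eq_self (Ioo_subset_Ioc_self hz.2))
  have hhigh : DifferentiableOn ℂ (periodize p F) (Ioi (R + |p.re|) ×ℂ Ioo 0 (-p.im)) := by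
    refine (hd.comp (differentiableOn_id.add_const p) fun z hz ↦ ?_).congr fun z hz ↦ ?_
    · have hre : R + |p.re| < z.re := hz.1
      have him : z.im ∈ Ioo 0 (-p.im) := hz.2
      exact ⟨show R < z.re + p.re by linarith [neg_abs_le p.re],
        show p.im < z.im + p.im by linarith [him.1], show z.im + p.im < 0 by linarith [him.2]⟩
    · have him : z.im ∈ Ioo 0 (-p.im) := hz.2
      rw [← (periodic_periodize hp.ne F) z]
      exact congrArg F (stripRep_eq_self ⟨by simp; linarith [him.1], by simp; linarith [him.2]⟩)
  refine Complex.differentiableOn_of_differentiableOn_diff_im_eq (a := 0)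
    (isOpen_Ioi.reProdIm isOpen_Ioo) ((continuousOn_periodize hp hc hper).mono
      (reProdIm_subset_iff'.mpr (.inl ⟨Ioi_subset_Ici_self, Ioo_subset_Icc_self⟩)))
    fun z ⟨⟨hre, him⟩, hz0⟩ ↦ ?_
  rcases lt_or_gt_of_ne (show z.im ≠ 0 from hz0) with hneg | hpos
  · exact (hlow.differentiableAt ((isOpen_Ioi.reProdIm isOpen_Ioo).mem_nhds
      ⟨hre, him.1, hneg⟩)).differentiableWithinAt
  · exact (hhigh.differentiableAt ((isOpen_Ioi.reProdIm isOpen_Ioo).mem_nhds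
      ⟨hre, hpos, him.2⟩)).differentiableWithinAt

theorem differentiableAt_periodize (hp : p.im < 0) (hc : ContinuousOn F (Ici R ×ℂ Icc p.im 0))
    (hd : DifferentiableOn ℂ F (Ioi R ×ℂ Ioo p.im 0)) (hper : ∀ x : ℝ, R ≤ x → F (x + p) = F x)
    {z : ℂ} (hz : R + |p.re| < (stripRep p z).re) : DifferentiableAt ℂ (periodize p F) z := by
  have hrep : stripRep p z ∈ Ioi (R + |p.re|) ×ℂ Ioo p.im (-p.im) :=
    ⟨hz, (im_stripRep_mem hp z).1, (im_stripRep_mem hp z).2.trans_lt (by linarith)⟩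
  have htrans : periodize p F = fun w ↦ periodize p F (w - ⌊z.im / p.im⌋ * p) :=
    funext fun w ↦ ((periodic_periodize hp.ne F).sub_int_mul_eq _).symm
  rw [htrans]
  exact ((differentiableOn_periodize hp hc hd hper).differentiableAt
    ((isOpen_Ioi.reProdIm isOpen_Ioo).mem_nhds hrep)).comp
    (f := fun w ↦ w - ⌊z.im / p.im⌋ * p) z (differentiableAt_id.sub_const _)

end Holomorphic

section Decay

variable {p : ℂ}

lemma abs_re_mul_neg_im_sub_le (hp : p.im < 0) {w : ℂ} (hw : w.im ∈ Icc p.im 0) :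
    |w.re * -p.im - normSq p * (w / p).im| ≤ -p.im * |p.re| := by
  have hp0 : normSq p ≠ 0 := normSq_eq_zero.not.mpr fun h ↦ by simp [h] at hp
  have : w.re * -p.im - normSq p * (w / p).im = -(w.im * p.re) := by
    rw [div_im]; field_simp; ring
  rw [this, abs_neg, abs_mul, abs_of_nonpos hw.2]
  exact mul_le_mul_of_nonneg_right (by linarith [hw.1]) (abs_nonneg _)

lemma tendsto_div_im_atTop (hp : p.im < 0) :
    Tendsto (fun z ↦ (z / p).im) (comap re atTop ⊓ 𝓟 (im ⁻¹' Icc p.im 0)) atTop := by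
  have hN : 0 < normSq p := normSq_pos.mpr fun h ↦ by simp [h] at hp
  refine tendsto_atTop_mono' _ ?_ (((tendsto_atTop_add_const_right _ (-|p.re|)
    (tendsto_comap.mono_left inf_le_left)).const_mul_atTop (div_pos (neg_pos.mpr hp) hN)))
  filter_upwards [mem_inf_of_right (mem_principal_self _)] with z hz
  have := abs_le.mp (abs_re_mul_neg_im_sub_le hp hz)
  rw [div_mul_eq_mul_div, div_le_iff₀ hN]
  nlinarith [this.1]

lemma tendsto_stripRep_mul (hp : p.im < 0) :
    Tendsto (fun ζ ↦ stripRep p (p * ζ)) (comap im atTop)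
      (comap re atTop ⊓ 𝓟 (im ⁻¹' Icc p.im 0)) := by
  have hp0 : p ≠ 0 := fun h ↦ by simp [h] at hp
  refine tendsto_inf.mpr ⟨tendsto_comap_iff.mpr ?_, tendsto_principal.mpr
    (.of_forall fun ζ ↦ Ioc_subset_Icc_self (im_stripRep_mem hp _))⟩
  refine tendsto_atTop_mono (fun ζ ↦ ?_) (tendsto_atTop_add_const_right _ (-|p.re|)
    ((tendsto_comap (f := im)).const_mul_atTop (div_pos (normSq_pos.mpr hp0) (neg_pos.mpr hp))))
  have := abs_le.mp (abs_re_mul_neg_im_sub_le hp (Ioc_subset_Icc_self (im_stripRep_mem hp (p * ζ))))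
  rw [div_im_stripRep hp0, mul_div_cancel_left₀ _ hp0] at this
  simp only [Function.comp_apply]
  rw [div_mul_eq_mul_div, div_add' _ _ _ (neg_pos.mpr hp).ne', div_le_iff₀ (neg_pos.mpr hp)]
  nlinarith [this.2]

theorem isBigO_exp_of_periodic_boundary (hp : p.im < 0) {R : ℝ} {F : ℂ → ℂ}
    (hc : ContinuousOn F (Ici R ×ℂ Icc p.im 0)) (hd : DifferentiableOn ℂ F (Ioi R ×ℂ Ioo p.im 0))
    (hper : ∀ x : ℝ, R ≤ x → F (x + p) = F x)
    (hlim : Tendsto F (comap re atTop ⊓ 𝓟 (im ⁻¹' Icc p.im 0)) (𝓝 0)) :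
    F =O[comap re atTop ⊓ 𝓟 (im ⁻¹' Icc p.im 0)] fun z ↦ Real.exp (-2 * π * (z / p).im) := by
  have hp0 : p ≠ 0 := fun h ↦ by simp [h] at hp
  set f : ℂ → ℂ := fun ζ ↦ periodize p F (p * ζ)
  have hf_per : Function.Periodic f 1 := fun ζ ↦ by
    simp only [f, mul_add, mul_one, periodic_periodize hp.ne F (p * ζ)]
  have hf_hol : ∀ᶠ ζ in comap im atTop, DifferentiableAt ℂ f ζ := by
    filter_upwards [(tendsto_stripRep_mul hp).eventually
      ((tendsto_comap.mono_left inf_le_left).eventually_gt_atTop (R + |p.re|))] with ζ hζ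
    exact (differentiableAt_periodize hp hc hd hper hζ).comp ζ (differentiableAt_id.const_mul p)
  have hf_zero : ZeroAtFilter (comap im atTop) f := hlim.comp (tendsto_stripRep_mul hp)
  have hF : F =ᶠ[comap re atTop ⊓ 𝓟 (im ⁻¹' Icc p.im 0)] fun z ↦ f (z / p) := by
    filter_upwards [mem_inf_of_right (mem_principal_self _),
      mem_inf_of_left (preimage_mem_comap (Ici_mem_atTop (R + p.re)))] with z hz hzR
    simp only [f, mul_div_cancel₀ _ hp0]
    exact (periodize_eq hp hper hz (by simp at hzR; linarith)).symm
  simpa [Function.comp_def] using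
    ((hf_per.exp_decay_of_zero_at_inf one_pos hf_hol hf_zero).comp_tendsto
      (tendsto_comap_iff.mpr (tendsto_div_im_atTop hp))).congr' hF.symm .rfl

end Decay

lemma closure_strip {α : ℝ} (hα : 0 < α) : closure (Strip α) = im ⁻¹' Icc (-α) 0 := by
  rw [show Strip α = im ⁻¹' Ioo (-α) 0 from rfl, closure_preimage_im,
    closure_Ioo (by linarith : -α ≠ 0)]

lemma re_gamTilde_mul (α κ : ℝ) (z : ℂ) : (gamTilde α κ * z).re = α * (z / (κ - I * α)).im := by
  rw [show gamTilde α κ * z = -(I * (α * (z / (κ - I * α)))) by rw [gamTilde]; ring]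
  simp

lemma eventually_comap_re_atTop_inf_principal {S : Set ℂ} {P : ℂ → Prop} :
    (∀ᶠ z in comap re atTop ⊓ 𝓟 S, P z) ↔ ∃ X, ∀ z ∈ S, X ≤ z.re → P z := by
  simp only [eventually_inf_principal, eventually_comap, eventually_atTop]
  exact ⟨fun ⟨X, h⟩ ↦ ⟨X, fun z hz hX ↦ h _ hX z rfl hz⟩,
    fun ⟨X, h⟩ ↦ ⟨X, fun _ hb z hz hS ↦ h z hS (hz ▸ hb)⟩⟩

lemma eventually_comap_re_atBot_inf_principal {S : Set ℂ} {P : ℂ → Prop} :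
    (∀ᶠ z in comap re atBot ⊓ 𝓟 S, P z) ↔ ∃ X, ∀ z ∈ S, z.re ≤ X → P z := by
  simp only [eventually_inf_principal, eventually_comap, eventually_atBot]
  exact ⟨fun ⟨X, h⟩ ↦ ⟨X, fun z hz hX ↦ h _ hX z rfl hz⟩,
    fun ⟨X, h⟩ ↦ ⟨X, fun _ hb z hz hS ↦ h z hS (hz ▸ hb)⟩⟩

section StripDecay

variable {α κ R : ℝ} {F : ℂ → ℂ}

theorem exists_norm_le_exp_atTop (hα : 0 < α) (hc : ContinuousOn F (closure (Strip α)))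
    (hd : DifferentiableOn ℂ F (Strip α ∩ {z | R < z.re}))
    (hper : ∀ x : ℝ, R ≤ x → F (x + (κ - I * α)) = F x)
    (hlim : Tendsto F (comap re atTop ⊓ 𝓟 (closure (Strip α))) (𝓝 0)) :
    ∃ C X : ℝ, 0 < C ∧ ∀ z ∈ closure (Strip α), X ≤ z.re →
      ‖F z‖ ≤ C * Real.exp (-(2 * π / α) * (gamTilde α κ * z).re) := by
  have hS : closure (Strip α) = im ⁻¹' Icc (κ - I * α : ℂ).im 0 := by simp [closure_strip hα]
  rw [hS] at hc hlim
  obtain ⟨C, hC, hCw⟩ := (isBigO_exp_of_periodic_boundary (by simpa using hα)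
    (hc.mono fun z hz ↦ hz.2) (hd.mono fun z hz ↦ ⟨⟨by simpa using hz.2.1, hz.2.2⟩, hz.1⟩)
    hper hlim).exists_pos
  obtain ⟨X, hX⟩ := eventually_comap_re_atTop_inf_principal.mp (Asymptotics.isBigOWith_iff.mp hCw)
  refine ⟨C, X, hC, fun z hz hzX ↦ ?_⟩
  rw [re_gamTilde_mul, show -(2 * π / α) * (α * (z / (κ - I * α)).im) =
    -2 * π * (z / (κ - I * α)).im by field_simp]
  simpa using hX z (hS ▸ hz) hzX

theorem exists_norm_le_exp_atBot (hα : 0 < α) (hc : ContinuousOn F (closure (Strip α)))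
    (hd : DifferentiableOn ℂ F (Strip α ∩ {z | z.re < -R}))
    (hper : ∀ x : ℝ, x ≤ -R → F (x + (κ - I * α)) = F x)
    (hlim : Tendsto F (comap re atBot ⊓ 𝓟 (closure (Strip α))) (𝓝 0)) :
    ∃ C X : ℝ, 0 < C ∧ ∀ z ∈ closure (Strip α), z.re ≤ -X →
      ‖F z‖ ≤ C * Real.exp ((2 * π / α) * (gamTilde α κ * z).re) := by
  set σ : ℂ → ℂ := fun z ↦ -z - I * α
  have hσσ : ∀ z, σ (σ z) = z := fun z ↦ by ring
  have hσS : MapsTo σ (closure (Strip α)) (closure (Strip α)) := fun z hz ↦ by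
    rw [closure_strip hα] at hz ⊢
    exact ⟨by simp [σ]; linarith [hz.2], by simp [σ]; linarith [hz.1]⟩
  have hσlim : Tendsto σ (comap re atTop ⊓ 𝓟 (closure (Strip α)))
      (comap re atBot ⊓ 𝓟 (closure (Strip α))) :=
    tendsto_inf.mpr ⟨tendsto_comap_iff.mpr (tendsto_neg_atTop_atBot.comp
      (tendsto_comap.mono_left inf_le_left) |>.congr fun z ↦ by simp [σ]),
      (tendsto_principal_principal.mpr hσS).mono_left inf_le_right⟩
  obtain ⟨C, X, hC, h⟩ := exists_norm_le_exp_atTop hα (F := F ∘ σ) (R := R + |κ|) (κ := κ)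
    (hc.comp (by fun_prop) hσS)
    (hd.comp (by fun_prop) fun z hz ↦
      ⟨⟨by simp [σ]; linarith [hz.1.2], by simp [σ]; linarith [hz.1.1]⟩,
        by simp [σ]; linarith [show R + |κ| < z.re from hz.2, abs_nonneg κ]⟩)
    (fun x hx ↦ by
      have := hper (-x - κ) (by linarith [neg_abs_le κ])
      simp only [Function.comp, σ]
      push_cast at this
      convert this.symm using 2 <;> ring)
    (hlim.comp hσlim)
  refine ⟨C * Real.exp ((2 * π / α) * (gamTilde α κ * (I * α)).re), X, by positivity,
    fun z hz hzX ↦ ?_⟩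
  have := h (σ z) (hσS hz) (by simp [σ]; linarith)
  rw [Function.comp_apply, hσσ] at this
  refine this.trans (le_of_eq ?_)
  rw [mul_assoc, ← Real.exp_add]
  congr 2
  simp only [σ, mul_sub, mul_neg, sub_re, neg_re]
  ring

end StripDecay

section Limits

variable {l : Filter ℂ}

lemma tendsto_zero_of_norm_sub_div_le (hl : Tendsto (fun z ↦ |z.re|) l atTop) {f : ℂ → ℂ} {c : ℂ}
    {C : ℝ} (h : ∀ᶠ z in l, ‖f z - c / z‖ ≤ C / ‖z‖ ^ 2) : Tendsto f l (𝓝 0) := by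
  have hnorm : Tendsto (fun z ↦ ‖z‖) l atTop := tendsto_atTop_mono (fun z ↦ abs_re_le_norm z) hl
  have hmain : Tendsto (fun z ↦ f z - c / z) l (𝓝 0) :=
    squeeze_zero_norm' h (tendsto_const_nhds.div_atTop ((tendsto_pow_atTop two_ne_zero).comp hnorm))
  have htail : Tendsto (fun z ↦ c / z) l (𝓝 0) := by
    rw [tendsto_zero_iff_norm_tendsto_zero]
    simpa only [norm_div] using tendsto_const_nhds.div_atTop hnorm
  simpa using hmain.add htail

lemma tendsto_zero_of_norm_le_exp (hl : Tendsto (fun z ↦ |z.re|) l atTop) {G : ℂ → ℂ} {CG ϱ : ℝ}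
    (hϱ : 0 < ϱ) (h : ∀ᶠ z in l, ‖G z‖ ≤ CG * Real.exp (-ϱ * |z.re|)) : Tendsto G l (𝓝 0) :=
  squeeze_zero_norm' h <| by
    simpa using (Real.tendsto_exp_atBot.comp
      (hl.const_mul_atTop_of_neg (neg_lt_zero.mpr hϱ))).const_mul CG

end Limits

lemma add_eq_of_jump {Ξ Gs : ℂ → ℂ} {Gc : ℝ → ℂ} {g : ℝ → ℝ} {α κ x : ℝ}
    (hjump : Ξ (g x - I * α) = Ξ x + (Gc x + Gs x - Gs (g x - I * α))) (hGc : Gc x = 0)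
    (hg : g x = x + κ) : Ξ (x + (κ - I * α)) + Gs (x + (κ - I * α)) = Ξ x + Gs x := by
  rw [hGc, hg] at hjump
  push_cast at hjump
  rw [← add_sub_assoc]
  linear_combination hjump

theorem improved_decay_at_infinity_general
    (α : ℝ) (hα : 0 < α) (κm κp M : ℝ) (hM : 0 < M)
    (g : ℝ → ℝ)
    (hg_left : ∀ x : ℝ, x ≤ -M → g x = x + κm)
    (hg_right : ∀ x : ℝ, M ≤ x → g x = x + κp)
    -- the shift function data
    (Gc : ℝ → ℂ)
    (hGcsupp : ∀ x : ℝ, x ∉ Set.Icc (-M) M → Gc x = 0)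
    (Gs : ℂ → ℂ) (hGs_smooth : ContDiffOn ℝ (⊤ : ℕ∞) Gs (closure (Strip α)))
    (hGs_hol : DifferentiableOn ℂ Gs (Strip α ∩ {z : ℂ | M / 2 < |z.re|}))
    (CG ϱ : ℝ) (hϱ : 0 < ϱ)
    (hGs_dec : ∀ z ∈ closure (Strip α), M / 2 < |z.re| →
      ‖Gs z‖ ≤ CG * Real.exp (-ϱ * |z.re|))
    -- the solution and its hypotheses
    (Ξ : ℂ → ℂ)
    (hΞ_hol : DifferentiableOn ℂ Ξ (Strip α))
    (hΞ_cont : ContinuousOn Ξ (closure (Strip α)))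
    (hjump : ∀ x : ℝ, Ξ ((g x : ℂ) - Complex.I * (α : ℂ))
      = Ξ (x : ℂ) + (Gc x + Gs (x : ℂ) - Gs ((g x : ℂ) - Complex.I * (α : ℂ))))
    (CΞ Cm1 : ℂ) (C X : ℝ)
    (hplus : ∀ z ∈ closure (Strip α), X ≤ z.re → ‖Ξ z - Cm1 / z‖ ≤ C / ‖z‖ ^ 2)
    (hminus : ∀ z ∈ closure (Strip α), z.re ≤ -X → ‖Ξ z - CΞ - Cm1 / z‖ ≤ C / ‖z‖ ^ 2) :
    ∃ C' X' : ℝ, 0 < C' ∧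
      (∀ z ∈ closure (Strip α), X' ≤ z.re →
        ‖Ξ z + Gs z‖ ≤ C' * Real.exp (-(2 * π / α) * (gamTilde α κp * z).re)) ∧
      (∀ z ∈ closure (Strip α), z.re ≤ -X' →
        ‖Ξ z - CΞ + Gs z‖ ≤ C' * Real.exp ((2 * π / α) * (gamTilde α κm * z).re)) := by
  have hΞ_hol' : DifferentiableOn ℂ Ξ (Strip α ∩ {z | M < |z.re|}) := hΞ_hol.mono inter_subset_left
  have hGs_hol' : DifferentiableOn ℂ Gs (Strip α ∩ {z | M < |z.re|}) :=
    hGs_hol.mono fun z hz ↦ ⟨hz.1, show M / 2 < |z.re| by linarith [show M < |z.re| from hz.2]⟩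
  have htop : Tendsto (fun z : ℂ ↦ |z.re|) (comap re atTop ⊓ 𝓟 (closure (Strip α))) atTop :=
    tendsto_abs_atTop_atTop.comp (tendsto_comap.mono_left inf_le_left)
  have hbot : Tendsto (fun z : ℂ ↦ |z.re|) (comap re atBot ⊓ 𝓟 (closure (Strip α))) atTop :=
    tendsto_abs_atBot_atTop.comp (tendsto_comap.mono_left inf_le_left)
  have hGs_top := tendsto_zero_of_norm_le_exp htop hϱ (eventually_comap_re_atTop_inf_principal.mpr
    ⟨M, fun z hz hzM ↦ hGs_dec z hz (by linarith [le_abs_self z.re])⟩)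
  have hGs_bot := tendsto_zero_of_norm_le_exp hbot hϱ (eventually_comap_re_atBot_inf_principal.mpr
    ⟨-M, fun z hz hzM ↦ hGs_dec z hz (by linarith [neg_abs_le z.re])⟩)
  have hΞ_top := tendsto_zero_of_norm_sub_div_le htop
    (eventually_comap_re_atTop_inf_principal.mpr ⟨X, hplus⟩)
  have hΞ_bot := tendsto_zero_of_norm_sub_div_le (f := fun z ↦ Ξ z - CΞ) hbot
    (eventually_comap_re_atBot_inf_principal.mpr ⟨-X, hminus⟩)
  obtain ⟨C₁, X₁, hC₁, h₁⟩ := exists_norm_le_exp_atTop hα (F := fun z ↦ Ξ z + Gs z) (R := M + 1)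
    (hΞ_cont.add hGs_smooth.continuousOn) ((hΞ_hol'.add hGs_hol').mono fun z hz ↦
      ⟨hz.1, show M < |z.re| by linarith [show M + 1 < z.re from hz.2, le_abs_self z.re]⟩)
    (fun x hx ↦ add_eq_of_jump (hjump x) (hGcsupp x fun h ↦ by linarith [h.2])
      (hg_right x (by linarith)))
    (by simpa using hΞ_top.add hGs_top)
  obtain ⟨C₂, X₂, hC₂, h₂⟩ := exists_norm_le_exp_atBot hα (F := fun z ↦ Ξ z - CΞ + Gs z)
    (R := M + 1) ((hΞ_cont.sub continuousOn_const).add hGs_smooth.continuousOn)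
    (((hΞ_hol'.sub_const CΞ).add hGs_hol').mono fun z hz ↦
      ⟨hz.1, show M < |z.re| by linarith [show z.re < -(M + 1) from hz.2, neg_abs_le z.re]⟩)
    (fun x hx ↦ by
      linear_combination add_eq_of_jump (hjump x) (hGcsupp x fun h ↦ by linarith [h.1])
        (hg_left x (by linarith)))
    (by simpa using hΞ_bot.add hGs_bot)
  refine ⟨max C₁ C₂, max X₁ X₂, lt_max_of_lt_left hC₁, fun z hz hzX ↦ ?_, fun z hz hzX ↦ ?_⟩
  · exact (h₁ z hz (le_of_max_le_left hzX)).trans (by gcongr; exact le_max_left _ _)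
  · exact (h₂ z hz (by linarith [le_max_right X₁ X₂])).trans (by gcongr; exact le_max_right _ _)

/-- improved exponential decay at infinity.  If `Ξ` is holomorphic on `S_α`,
continuous up to the boundary, satisfies the jump `Ξ₊(g(x) − iα) = Ξ₋(x) + G_Ξ(x)` with a
shift function `G_Ξ(x) = G^{(c)}(x) + 𝒢(x) − 𝒢(g(x) − iα)`, and has the `O(z⁻¹)` asymptotics
`Ξ(z) = C_Ξ δ_{±,−} + C_{−1}/z + O(z^{−2})` uniformly up to the boundary, then in fact
`Ξ(z) = −𝒢(z) + O(e^{−(2π/α)Re(γ̃₊z)})` as `Re z → +∞` and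
`Ξ(z) = C_Ξ − 𝒢(z) + O(e^{(2π/α)Re(γ̃₋z)})` as `Re z → −∞`, uniformly up to the boundary. -/
theorem improved_decay_at_infinity
    (α : ℝ) (hα : 0 < α) (κm κp M : ℝ) (hM : 0 < M)
    (g : ℝ → ℝ) (hg_smooth : ContDiff ℝ (⊤ : ℕ∞) g) (hg_mono : StrictMono g)
    (hg_surj : Function.Surjective g) (hg_deriv : ∀ x : ℝ, 0 < deriv g x)
    (hg_left : ∀ x : ℝ, x ≤ -M → g x = x + κm)
    (hg_right : ∀ x : ℝ, M ≤ x → g x = x + κp)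
    -- the shift function data
    (Gc : ℝ → ℂ) (hGc : ContDiff ℝ (⊤ : ℕ∞) Gc)
    (hGcsupp : ∀ x : ℝ, x ∉ Set.Icc (-M) M → Gc x = 0)
    (Gs : ℂ → ℂ) (hGs_smooth : ContDiffOn ℝ (⊤ : ℕ∞) Gs (closure (Strip α)))
    (hGs_hol : DifferentiableOn ℂ Gs (Strip α ∩ {z : ℂ | M / 2 < |z.re|}))
    (CG ϱ : ℝ) (hCG : 0 < CG) (hϱ : 0 < ϱ)
    (hGs_dec : ∀ z ∈ closure (Strip α), M / 2 < |z.re| →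
      ‖Gs z‖ ≤ CG * Real.exp (-ϱ * |z.re|))
    -- the solution and its hypotheses
    (Ξ : ℂ → ℂ)
    (hΞ_hol : DifferentiableOn ℂ Ξ (Strip α))
    (hΞ_cont : ContinuousOn Ξ (closure (Strip α)))
    (hjump : ∀ x : ℝ, Ξ ((g x : ℂ) - Complex.I * (α : ℂ))
      = Ξ (x : ℂ) + (Gc x + Gs (x : ℂ) - Gs ((g x : ℂ) - Complex.I * (α : ℂ))))
    (CΞ Cm1 : ℂ) (C X : ℝ) (hC : 0 < C)
    (hplus : ∀ z ∈ closure (Strip α), X ≤ z.re → ‖Ξ z - Cm1 / z‖ ≤ C / ‖z‖ ^ 2)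
    (hminus : ∀ z ∈ closure (Strip α), z.re ≤ -X → ‖Ξ z - CΞ - Cm1 / z‖ ≤ C / ‖z‖ ^ 2) :
    ∃ C' X' : ℝ, 0 < C' ∧
      (∀ z ∈ closure (Strip α), X' ≤ z.re →
        ‖Ξ z + Gs z‖ ≤ C' * Real.exp (-(2 * π / α) * (gamTilde α κp * z).re)) ∧
      (∀ z ∈ closure (Strip α), z.re ≤ -X' →
        ‖Ξ z - CΞ + Gs z‖ ≤ C' * Real.exp ((2 * π / α) * (gamTilde α κm * z).re)) :=
  improved_decay_at_infinity_general α hα κm κp M hM g hg_left hg_right Gc hGcsupp Gs hGs_smooth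
    hGs_hol CG ϱ hϱ hGs_dec Ξ hΞ_hol hΞ_cont hjump CΞ Cm1 C X hplus hminus

end
end

section
/- The limits α₀ = lim_{k→0, k≠0} α↑(k)/k and α̃₀ = lim_{k→0, k≠0} k·α↓(k) exist and equal α₀ = −iπ·√(2AB) and α̃₀ = −i/(π·√(2AB)) (principal square root); in particular α₀·α̃₀ = −1. -/
open MeasureTheory Real

noncomputable section

/-- `A = (α + iκ)/(2π)`. -/
def Acst (α κ : ℝ) : ℂ := ((α : ℂ) + Complex.I * (κ : ℂ)) / (2 * (π : ℂ))

/-- `B = (τ − α − iκ)/(2π)`. -/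
def Bcst (τ α κ : ℝ) : ℂ := ((τ : ℂ) - (α : ℂ) - Complex.I * (κ : ℂ)) / (2 * (π : ℂ))

/-- `C = τ/(2π)`. -/
def Ccst (τ : ℝ) : ℂ := (τ : ℂ) / (2 * (π : ℂ))

/-- The Wiener–Hopf factor `α↑`. -/
def aup (τ α κ : ℝ) (k : ℂ) : ℂ :=
  -Complex.I * k * (2 * (π : ℂ) * Acst α κ * Bcst τ α κ) ^ ((1 : ℂ) / 2) *
    Ccst τ ^ (Complex.I * k * Ccst τ) *
    Acst α κ ^ (-(Complex.I * k * Acst α κ)) *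
    Bcst τ α κ ^ (-(Complex.I * k * Bcst τ α κ)) *
    Complex.Gamma (1 / 2 - Complex.I * Ccst τ * k) /
    (Complex.Gamma (1 - Complex.I * Bcst τ α κ * k) *
      Complex.Gamma (1 - Complex.I * Acst α κ * k))

/-- The Wiener–Hopf factor `α↓`. -/
def adown (τ α κ : ℝ) (k : ℂ) : ℂ :=
  Complex.I * k * (Acst α κ * Bcst τ α κ / (2 * (π : ℂ))) ^ ((1 : ℂ) / 2) *
    Ccst τ ^ (Complex.I * k * Ccst τ) *
    Acst α κ ^ (-(Complex.I * k * Acst α κ)) *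
    Bcst τ α κ ^ (-(Complex.I * k * Bcst τ α κ)) *
    Complex.Gamma (Complex.I * Acst α κ * k) * Complex.Gamma (Complex.I * Bcst τ α κ * k) /
    Complex.Gamma (1 / 2 + Complex.I * Ccst τ * k)

/-! Near `k = 0` the phase factor `C^{ikC} A^{-ikA} B^{-ikB}` tends to `1`, and `Γ` is continuous
at `1/2` and `1`, while `Γ(iAk)` and `Γ(iBk)` have simple poles with residues `1/(iA)` and `1/(iB)`
(from `z Γ(z) → 1`). Hence `α↑(k)/k → -i √(2πAB) Γ(1/2)` and
`k α↓(k) → i √(AB/(2π)) / (Γ(1/2) (iA)(iB))`. With `Γ(1/2) = √π`, and since positive real factors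
come out of principal square roots, both limits are the stated multiples of `s = √(2AB)`;
`s² = 2AB ≠ 0` then gives the product. -/

open Complex Filter Topology

lemma ofReal_mul_cpow {r : ℝ} (hr : 0 ≤ r) (z w : ℂ) :
    ((r : ℂ) * z) ^ w = (r : ℂ) ^ w * z ^ w := by
  rcases hr.eq_or_lt with rfl | hr
  · rcases eq_or_ne w 0 with rfl | hw <;> simp [zero_cpow, *]
  rcases eq_or_ne z 0 with rfl | hz
  · rcases eq_or_ne w 0 with rfl | hw <;> simp [zero_cpow, *]
  have hr' : (r : ℂ) ≠ 0 := ofReal_ne_zero.2 hr.ne'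
  rw [cpow_def_of_ne_zero (mul_ne_zero hr' hz), cpow_def_of_ne_zero hr', cpow_def_of_ne_zero hz,
    log_ofReal_mul hr hz, ofReal_log hr.le, add_mul, Complex.exp_add]

lemma ofReal_cpow_one_half {r : ℝ} (hr : 0 ≤ r) : (r : ℂ) ^ ((1 : ℂ) / 2) = (√r : ℝ) := by
  rw [Real.sqrt_eq_rpow, ofReal_cpow hr]; norm_num

lemma ofReal_sq_mul_cpow_one_half {r : ℝ} (hr : 0 ≤ r) (z : ℂ) :
    (((r ^ 2 : ℝ) : ℂ) * z) ^ ((1 : ℂ) / 2) = r * z ^ ((1 : ℂ) / 2) := by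
  rw [ofReal_mul_cpow (sq_nonneg r), ofReal_cpow_one_half (sq_nonneg r), Real.sqrt_sq hr]

lemma cpow_one_half_sq (z : ℂ) : (z ^ ((1 : ℂ) / 2)) ^ 2 = z := by
  rw [← cpow_mul_nat]; norm_num

lemma Gamma_one_half_eq_sqrt_pi : Complex.Gamma (1 / 2) = (√π : ℝ) := by
  rw [Complex.Gamma_one_half_eq, ofReal_cpow_one_half pi_pos.le]

lemma ContinuousAt.Gamma_of_re_pos {f : ℂ → ℂ} {x : ℂ} (hf : ContinuousAt f x)
    (hfx : 0 < (f x).re) : ContinuousAt (fun k => Complex.Gamma (f k)) x := by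
  refine (continuousAt_Gamma _ fun m hm => ?_).comp hf
  rw [hm, neg_re, natCast_re] at hfx
  linarith [m.cast_nonneg (α := ℝ)]

lemma tendsto_mul_Gamma_const_mul_nhdsNE_zero {a : ℂ} (ha : a ≠ 0) :
    Tendsto (fun k => k * Complex.Gamma (a * k)) (𝓝[≠] 0) (𝓝 a⁻¹) := by
  have hmap : Tendsto (fun k : ℂ => a * k) (𝓝[≠] 0) (𝓝[≠] 0) :=
    tendsto_nhdsWithin_of_tendsto_nhds_of_eventually_within _
      ((continuous_const_mul a).tendsto' 0 0 (mul_zero a) |>.mono_left nhdsWithin_le_nhds)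
      (eventually_mem_nhdsWithin.mono fun k hk => mul_ne_zero ha hk)
  have := (tendsto_self_mul_Gamma_nhds_zero.comp hmap).const_mul a⁻¹
  rw [mul_one] at this
  refine this.congr fun k => ?_
  simp only [Function.comp_apply]
  field_simp

def phaseFactor (A B C k : ℂ) : ℂ := C ^ (I * k * C) * A ^ (-(I * k * A)) * B ^ (-(I * k * B))

lemma continuousAt_phaseFactor {A B C : ℂ} (hA : A ≠ 0) (hB : B ≠ 0) (hC : C ≠ 0) :
    ContinuousAt (phaseFactor A B C) 0 := by
  unfold phaseFactor
  exact (((continuousAt_const_cpow hC).comp (by fun_prop)).mul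
    ((continuousAt_const_cpow hA).comp (by fun_prop))).mul
    ((continuousAt_const_cpow hB).comp (by fun_prop))

@[simp] lemma phaseFactor_zero (A B C : ℂ) : phaseFactor A B C 0 = 1 := by
  simp [phaseFactor]

lemma Acst_ne_zero {α : ℝ} (κ : ℝ) (hα : 0 < α) : Acst α κ ≠ 0 := by
  refine div_ne_zero (fun h => hα.ne' ?_) (by simp [pi_ne_zero])
  simpa using congrArg re h

lemma Bcst_ne_zero {τ α : ℝ} (κ : ℝ) (hτ : α < τ) : Bcst τ α κ ≠ 0 := by
  refine div_ne_zero (fun h => (sub_pos.2 hτ).ne' ?_) (by simp [pi_ne_zero])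
  simpa using congrArg re h

lemma Ccst_ne_zero {τ : ℝ} (hτ : τ ≠ 0) : Ccst τ ≠ 0 := by
  simp [Ccst, hτ, pi_ne_zero]

lemma aup_div_self_eq (τ α κ : ℝ) {k : ℂ} (hk : k ≠ 0) :
    aup τ α κ k / k = -I * (2 * π * Acst α κ * Bcst τ α κ) ^ ((1 : ℂ) / 2) *
      phaseFactor (Acst α κ) (Bcst τ α κ) (Ccst τ) k * Complex.Gamma (1 / 2 - I * Ccst τ * k) /
      (Complex.Gamma (1 - I * Bcst τ α κ * k) * Complex.Gamma (1 - I * Acst α κ * k)) := by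
  simp only [aup, phaseFactor]
  field_simp

lemma mul_adown_eq (τ α κ : ℝ) (k : ℂ) :
    k * adown τ α κ k = I * (Acst α κ * Bcst τ α κ / (2 * π)) ^ ((1 : ℂ) / 2) *
      phaseFactor (Acst α κ) (Bcst τ α κ) (Ccst τ) k / Complex.Gamma (1 / 2 + I * Ccst τ * k) *
      (k * Complex.Gamma (I * Acst α κ * k)) * (k * Complex.Gamma (I * Bcst τ α κ * k)) := by
  simp only [adown, phaseFactor]
  ring

lemma tendsto_aup_div_self {τ α : ℝ} (κ : ℝ) (hα : 0 < α) (hτ : α < τ) :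
    Tendsto (fun k => aup τ α κ k / k) (𝓝[≠] 0)
      (𝓝 (-I * (2 * π * Acst α κ * Bcst τ α κ) ^ ((1 : ℂ) / 2) * (√π : ℝ))) := by
  have hcont : ContinuousAt (fun k => -I * (2 * π * Acst α κ * Bcst τ α κ) ^ ((1 : ℂ) / 2) *
      phaseFactor (Acst α κ) (Bcst τ α κ) (Ccst τ) k * Complex.Gamma (1 / 2 - I * Ccst τ * k) /
      (Complex.Gamma (1 - I * Bcst τ α κ * k) * Complex.Gamma (1 - I * Acst α κ * k))) 0 := by
    refine ((continuousAt_const.mul (continuousAt_phaseFactor (Acst_ne_zero κ hα)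
      (Bcst_ne_zero κ hτ) (Ccst_ne_zero (by linarith)))).mul ?_).div (.mul ?_ ?_) (by simp)
    all_goals exact ContinuousAt.Gamma_of_re_pos (by fun_prop) (by norm_num)
  refine (hcont.tendsto.mono_left nhdsWithin_le_nhds).congr' ?_ |>.trans_eq ?_
  · filter_upwards [self_mem_nhdsWithin] with k hk using (aup_div_self_eq τ α κ hk).symm
  · simp only [mul_zero, sub_zero, phaseFactor_zero, mul_one, Complex.Gamma_one, div_one,
      Gamma_one_half_eq_sqrt_pi]

lemma tendsto_mul_adown {τ α : ℝ} (κ : ℝ) (hα : 0 < α) (hτ : α < τ) :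
    Tendsto (fun k => k * adown τ α κ k) (𝓝[≠] 0)
      (𝓝 (I * (Acst α κ * Bcst τ α κ / (2 * π)) ^ ((1 : ℂ) / 2) / (√π : ℝ) *
        (I * Acst α κ)⁻¹ * (I * Bcst τ α κ)⁻¹)) := by
  have hA := Acst_ne_zero κ hα
  have hB := Bcst_ne_zero κ hτ
  have hcont : ContinuousAt (fun k => I * (Acst α κ * Bcst τ α κ / (2 * π)) ^ ((1 : ℂ) / 2) *
      phaseFactor (Acst α κ) (Bcst τ α κ) (Ccst τ) k / Complex.Gamma (1 / 2 + I * Ccst τ * k)) 0 :=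
    (continuousAt_const.mul (continuousAt_phaseFactor hA hB (Ccst_ne_zero (by linarith)))).div
      (ContinuousAt.Gamma_of_re_pos (by fun_prop) (by norm_num))
      (by simpa only [mul_zero, add_zero, Gamma_one_half_eq_sqrt_pi, ofReal_ne_zero,
        Real.sqrt_ne_zero'] using pi_pos)
  have hlim := ((hcont.tendsto.mono_left nhdsWithin_le_nhds).mul
    (tendsto_mul_Gamma_const_mul_nhdsNE_zero (mul_ne_zero I_ne_zero hA))).mul
    (tendsto_mul_Gamma_const_mul_nhdsNE_zero (mul_ne_zero I_ne_zero hB))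
  simpa only [← mul_adown_eq, mul_zero, add_zero, phaseFactor_zero, mul_one,
    Gamma_one_half_eq_sqrt_pi] using hlim

/-- `α₀ = lim_{k→0} α↑(k)/k = −iπ√(2AB)` and
`α̃₀ = lim_{k→0} k·α↓(k) = −i/(π√(2AB))`; in particular `α₀·α̃₀ = −1`. -/
theorem wiener_hopf_factors_zero_limits
    (τ α κ : ℝ) (hα : 0 < α) (hτ : α < τ) :
    Filter.Tendsto (fun k : ℂ => aup τ α κ k / k) (nhdsWithin 0 {(0 : ℂ)}ᶜ)
      (nhds (-Complex.I * (π : ℂ) * (2 * Acst α κ * Bcst τ α κ) ^ ((1 : ℂ) / 2))) ∧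
    Filter.Tendsto (fun k : ℂ => k * adown τ α κ k) (nhdsWithin 0 {(0 : ℂ)}ᶜ)
      (nhds (-Complex.I / ((π : ℂ) * (2 * Acst α κ * Bcst τ α κ) ^ ((1 : ℂ) / 2)))) ∧
    (-Complex.I * (π : ℂ) * (2 * Acst α κ * Bcst τ α κ) ^ ((1 : ℂ) / 2)) *
        (-Complex.I / ((π : ℂ) * (2 * Acst α κ * Bcst τ α κ) ^ ((1 : ℂ) / 2))) = -1 := by
  set s := (2 * Acst α κ * Bcst τ α κ) ^ ((1 : ℂ) / 2)
  have hA : Acst α κ ≠ 0 := Acst_ne_zero κ hα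
  have hB : Bcst τ α κ ≠ 0 := Bcst_ne_zero κ hτ
  have hs_sq : s ^ 2 = 2 * Acst α κ * Bcst τ α κ := cpow_one_half_sq _
  have hs : s ≠ 0 := fun h => by simp [h, hA, hB] at hs_sq
  have hp : ((√π : ℝ) : ℂ) ^ 2 = π := by exact_mod_cast Real.sq_sqrt pi_pos.le
  have hup : (2 * π * Acst α κ * Bcst τ α κ) ^ ((1 : ℂ) / 2) = (√π : ℝ) * s := by
    rw [← ofReal_sq_mul_cpow_one_half (Real.sqrt_nonneg π)]
    congr 1
    push_cast
    rw [hp]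
    ring
  have hdown : (Acst α κ * Bcst τ α κ / (2 * π)) ^ ((1 : ℂ) / 2) = ((2 * √π)⁻¹ : ℝ) * s := by
    rw [← ofReal_sq_mul_cpow_one_half (by positivity)]
    congr 1
    push_cast
    rw [inv_pow, mul_pow, hp]
    field_simp
  refine ⟨?_, ?_, ?_⟩
  · convert tendsto_aup_div_self κ hα hτ using 2
    rw [hup]
    linear_combination (I * s) * hp
  · convert tendsto_mul_adown κ hα hτ using 2
    rw [hdown]
    push_cast
    field_simp
    linear_combination (-2 * (√π : ℂ) ^ 2 * Acst α κ * Bcst τ α κ) * I_sq +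
      2 * Acst α κ * Bcst τ α κ * hp - π * hs_sq
  · field_simp
    linear_combination I_mul_I

end
end
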